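/- arXiv:1310.5766 — 3 statements merged into one kernel-verified Lean document; each statement's English description precedes it below -/
import Mathlib

section
/- Let ν₁, ν₂ > 0, α = ν₁ + ν₂ and ρ = ν₁/(ν₁+ν₂). Writing ν₁ = α(1-p̄), ν₂ = αp̄ with p̄ = 1-ρ fixed, define R_k(α) = (1 - Γ(2α)Γ(2ν₁+k+1)/(Γ(2α+k+1)Γ(2ν₁))) / (1 - Γ(2α)Γ(2ν₁+k)/(Γ(2α+k)Γ(2ν₁))). Then lim_{α→∞} R_k(α) = (1 - ρ^{k+1})/(1 - ρ^k) for every k ≥ 1. -/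
open Filter Finset

lemma gamma_shift (x : ℝ) (hx : 0 < x) (n : ℕ) :
    Real.Gamma (x + n) = (∏ j ∈ Finset.range n, (x + j)) * Real.Gamma x := by
  induction n with
  | zero => simp
  | succ n ih =>
    have hxn : x + n ≠ 0 := by positivity
    have : x + (↑(n+1) : ℝ) = (x + n) + 1 := by push_cast; ring
    rw [this, Real.Gamma_add_one hxn, ih, Finset.prod_range_succ]
    ring

lemma key_eq (pbar : ℝ) (hp1 : pbar < 1) (α : ℝ) (hα : 0 < α) (n : ℕ) :
    Real.Gamma (2 * α) * Real.Gamma (2 * (α * (1 - pbar)) + n) /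
      (Real.Gamma (2 * α + n) * Real.Gamma (2 * (α * (1 - pbar)))) =
    ∏ j ∈ Finset.range n, (2 * (α * (1 - pbar)) + j) / (2 * α + j) := by
  have hρ : 0 < 2 * (α * (1 - pbar)) := by nlinarith
  have hA : 0 < 2 * α := by linarith
  rw [gamma_shift _ hρ n, gamma_shift _ hA n, Finset.prod_div_distrib]
  have h1 : Real.Gamma (2 * α) ≠ 0 := (Real.Gamma_pos_of_pos hA).ne'
  have h2 : Real.Gamma (2 * (α * (1 - pbar))) ≠ 0 := (Real.Gamma_pos_of_pos hρ).ne'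
  have h3 : (∏ j ∈ Finset.range n, (2 * α + (j:ℝ))) ≠ 0 := by
    apply Finset.prod_ne_zero_iff.2
    intro j _
    positivity
  rw [div_eq_div_iff (mul_ne_zero (mul_ne_zero h3 h1) h2) h3]
  ring

lemma factor_tendsto (pbar : ℝ) (j : ℕ) :
    Tendsto (fun α : ℝ => (2 * (α * (1 - pbar)) + j) / (2 * α + j)) atTop
      (nhds (1 - pbar)) := by
  have h0 : Tendsto (fun α : ℝ => (j : ℝ) / α) atTop (nhds 0) :=
    Tendsto.div_atTop tendsto_const_nhds tendsto_id
  have h1 : Tendsto (fun α : ℝ => (2 * (1 - pbar) + (j:ℝ)/α) / (2 + (j:ℝ)/α)) atTop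
      (nhds ((2 * (1 - pbar) + 0) / (2 + 0))) := by
    exact Tendsto.div (tendsto_const_nhds.add h0) (tendsto_const_nhds.add h0) (by norm_num)
  have h2 : (2 * (1 - pbar) + 0) / (2 + 0) = 1 - pbar := by ring
  rw [h2] at h1
  refine h1.congr' ?_
  filter_upwards [eventually_gt_atTop (0:ℝ)] with α hα
  have hα' : α ≠ 0 := hα.ne'
  have hd : 2 * α + (j:ℝ) ≠ 0 := by positivity
  field_simp

lemma prod_tendsto (pbar : ℝ) (n : ℕ) :
    Tendsto (fun α : ℝ => ∏ j ∈ Finset.range n,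
        (2 * (α * (1 - pbar)) + j) / (2 * α + j)) atTop (nhds ((1 - pbar) ^ n)) := by
  have := tendsto_finset_prod (Finset.range n)
    (fun j _ => factor_tendsto pbar j)
  simpa using this

/-- With `pbar ∈ (0,1)` fixed, `ρ = 1 - pbar`, `ν₁ = α(1-pbar)`, and
`R_k(α)` the approximate Q-process transition ratio under the Beta
approximation, `R_k(α) → (1-ρ^(k+1))/(1-ρ^k)` as `α → ∞`, for every `k ≥ 1`. -/
theorem beta_ratio_limit (pbar : ℝ) (hp0 : 0 < pbar) (hp1 : pbar < 1) (k : ℕ) (hk : 1 ≤ k) :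
    Tendsto (fun α : ℝ =>
        (1 - Real.Gamma (2 * α) * Real.Gamma (2 * (α * (1 - pbar)) + (k + 1)) /
              (Real.Gamma (2 * α + (k + 1)) * Real.Gamma (2 * (α * (1 - pbar))))) /
        (1 - Real.Gamma (2 * α) * Real.Gamma (2 * (α * (1 - pbar)) + k) /
              (Real.Gamma (2 * α + k) * Real.Gamma (2 * (α * (1 - pbar))))))
      atTop (nhds ((1 - (1 - pbar) ^ (k + 1)) / (1 - (1 - pbar) ^ k))) := by
  have hρ0 : 0 < 1 - pbar := by linarith
  have hρ1 : 1 - pbar < 1 := by linarith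
  have hden : 1 - (1 - pbar) ^ k ≠ 0 := by
    have : (1 - pbar) ^ k < 1 := pow_lt_one₀ hρ0.le hρ1 (by omega)
    linarith
  have hnum := prod_tendsto pbar (k + 1)
  have hden' := prod_tendsto pbar k
  have hmain : Tendsto (fun α : ℝ =>
      (1 - ∏ j ∈ Finset.range (k+1), (2 * (α * (1 - pbar)) + j) / (2 * α + j)) /
      (1 - ∏ j ∈ Finset.range k, (2 * (α * (1 - pbar)) + j) / (2 * α + j)))
      atTop (nhds ((1 - (1 - pbar) ^ (k + 1)) / (1 - (1 - pbar) ^ k))) :=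
    Tendsto.div (tendsto_const_nhds.sub hnum) (tendsto_const_nhds.sub hden') hden
  refine hmain.congr' ?_
  filter_upwards [eventually_gt_atTop (0:ℝ)] with α hα
  have e1 := key_eq pbar hp1 α hα (k+1)
  have e2 := key_eq pbar hp1 α hα k
  push_cast at e1
  rw [← e1, ← e2]
end

section
/- Let s, μ, c > 0 with μ < c. Define S(x) = ∫₀ˣ e^{-2sζ/c}(1-ζ)^{-2μ/c} dζ and m(x) = e^{2sx/c}(1-x)^{2μ/c-1}/(cx) for x ∈ (0,1). Then the function m*(x) = S(x)² m(x) is integrable on (0,1). -/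
/-! Write `a = 2μ/c ∈ (0, 2)`. The exponential factors are bounded on `[0, 1]`, so for any
`b ∈ (max a 1, 1 + a/2)` the bound `(1-t)^{-a} ≤ (1-t)^{-b}` gives `S(x) ≲ x (1-x)^{1-b}`, while
`m(x) ≲ (1-x)^{a-1} / x`. Hence `m* ≲ (1-x)^{1+a-2b}`, and `1 + a - 2b > -1`. -/

open MeasureTheory Real Set

lemma continuousOn_one_sub_rpow (r : ℝ) : ContinuousOn (fun t : ℝ => (1 - t) ^ r) (Iio 1) :=
  (continuousOn_const.sub continuousOn_id).rpow_const fun _ ht => Or.inl (sub_pos.2 ht).ne'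

lemma integrableOn_one_sub_rpow {p : ℝ} (hp : -1 < p) :
    IntegrableOn (fun x : ℝ => (1 - x) ^ p) (Ioo 0 1) := by
  have h := (intervalIntegral.intervalIntegrable_rpow' (a := 1) (b := 0) hp).comp_sub_left 1
  simp only [sub_self, sub_zero] at h
  exact (intervalIntegrable_iff_integrableOn_Ioo_of_le zero_le_one).1 h

lemma exp_mul_le_exp_abs {k t : ℝ} (ht : t ∈ Icc (0 : ℝ) 1) : exp (k * t) ≤ exp |k| :=
  exp_le_exp.2 <| (le_abs_self _).trans <| by
    rw [abs_mul, abs_of_nonneg ht.1]; exact mul_le_of_le_one_right (abs_nonneg k) ht.2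

lemma integral_one_sub_rpow_neg_le {b x : ℝ} (hb₁ : 1 < b) (hb₂ : b ≤ 2) (hx₀ : 0 ≤ x)
    (hx₁ : x < 1) : ∫ t in (0 : ℝ)..x, (1 - t) ^ (-b) ≤ x * (1 - x) ^ (1 - b) / (b - 1) := by
  have hy : 0 < 1 - x := sub_pos.2 hx₁
  have hint : ∫ t in (0 : ℝ)..x, (1 - t) ^ (-b) = ((1 - x) ^ (1 - b) - 1) / (b - 1) := by
    rw [intervalIntegral.integral_comp_sub_left (fun u : ℝ => u ^ (-b)), sub_zero,
      integral_rpow (Or.inr ⟨by linarith, fun h => by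
        rw [uIcc_of_le (by linarith)] at h; linarith [h.1]⟩), one_rpow,
      neg_add_eq_sub, ← neg_div_neg_eq, neg_sub, neg_sub]
  have hsplit : x * (1 - x) ^ (1 - b) = (1 - x) ^ (1 - b) - (1 - x) ^ (2 - b) := by
    rw [show 2 - b = 1 + (1 - b) by ring, rpow_add hy, rpow_one]; ring
  rw [hint, hsplit]
  gcongr
  exact rpow_le_one hy.le (by linarith) (by linarith)

namespace WrightFisher

noncomputable section

variable (s μ c : ℝ)

def scaleDensity (t : ℝ) : ℝ := exp (-2 * s * t / c) * (1 - t) ^ (-(2 * μ / c))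

def scale (x : ℝ) : ℝ := ∫ t in (0 : ℝ)..x, scaleDensity s μ c t

def speedDensity (x : ℝ) : ℝ := exp (2 * s * x / c) * (1 - x) ^ (2 * μ / c - 1) / (c * x)

lemma continuousOn_scaleDensity : ContinuousOn (scaleDensity s μ c) (Iio 1) :=
  (continuous_exp.comp_continuousOn (by fun_prop)).mul (continuousOn_one_sub_rpow _)

lemma hasDerivAt_scale {x : ℝ} (hx : x < 1) :
    HasDerivAt (scale s μ c) (scaleDensity s μ c x) x := by
  have hsub : uIcc 0 x ⊆ Iio 1 := fun t ht => by
    rcases ht with ⟨-, h⟩; exact lt_of_le_of_lt h (max_lt zero_lt_one hx)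
  exact intervalIntegral.integral_hasDerivAt_right
    ((continuousOn_scaleDensity s μ c).mono hsub).intervalIntegrable
    ((continuousOn_scaleDensity s μ c).stronglyMeasurableAtFilter isOpen_Iio x hx)
    ((continuousOn_scaleDensity s μ c).continuousAt (Iio_mem_nhds hx))

lemma continuousOn_speedDensity (hc : 0 < c) : ContinuousOn (speedDensity s μ c) (Ioo 0 1) :=
  ((continuous_exp.comp_continuousOn (by fun_prop)).mul
      ((continuousOn_one_sub_rpow _).mono fun _ hx => hx.2)).div
    (by fun_prop) fun _ hx => (mul_pos hc hx.1).ne'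

variable {s μ c}

lemma scaleDensity_nonneg {t : ℝ} (ht : t ≤ 1) : 0 ≤ scaleDensity s μ c t :=
  mul_nonneg (exp_nonneg _) (rpow_nonneg (sub_nonneg.2 ht) _)

lemma scale_nonneg {x : ℝ} (hx : x ∈ Icc (0 : ℝ) 1) : 0 ≤ scale s μ c x :=
  intervalIntegral.integral_nonneg hx.1 fun _ ht => scaleDensity_nonneg (ht.2.trans hx.2)

lemma speedDensity_nonneg (hc : 0 < c) {x : ℝ} (hx : x ∈ Ioo (0 : ℝ) 1) :
    0 ≤ speedDensity s μ c x :=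
  div_nonneg (mul_nonneg (exp_nonneg _) (rpow_nonneg (sub_nonneg.2 hx.2.le) _))
    (mul_pos hc hx.1).le

lemma scaleDensity_le {b t : ℝ} (hb : 2 * μ / c ≤ b) (ht : t ∈ Ico (0 : ℝ) 1) :
    scaleDensity s μ c t ≤ exp |2 * s / c| * (1 - t) ^ (-b) := by
  have hy : 0 < 1 - t := sub_pos.2 ht.2
  have hexp : exp (-2 * s * t / c) ≤ exp |2 * s / c| := by
    simpa [← abs_neg (2 * s / c), neg_div, mul_div_right_comm] using
      exp_mul_le_exp_abs (k := -(2 * s / c)) (Ico_subset_Icc_self ht)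
  exact mul_le_mul hexp (rpow_le_rpow_of_exponent_ge hy (by linarith [ht.1]) (neg_le_neg hb))
    (rpow_nonneg hy.le _) (exp_nonneg _)

lemma speedDensity_le (hc : 0 < c) {x : ℝ} (hx : x ∈ Ioo (0 : ℝ) 1) :
    speedDensity s μ c x ≤ exp |2 * s / c| / c * ((1 - x) ^ (2 * μ / c - 1) / x) := by
  have hexp : exp (2 * s * x / c) ≤ exp |2 * s / c| := by
    simpa [mul_div_right_comm] using exp_mul_le_exp_abs (k := 2 * s / c) (Ioo_subset_Icc_self hx)
  rw [speedDensity, div_mul_div_comm]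
  have := rpow_nonneg (sub_nonneg.2 hx.2.le) (2 * μ / c - 1)
  have := mul_pos hc hx.1
  gcongr

lemma scale_le {b x : ℝ} (hb : 2 * μ / c ≤ b) (hb₁ : 1 < b) (hb₂ : b ≤ 2)
    (hx : x ∈ Ico (0 : ℝ) 1) :
    scale s μ c x ≤ exp |2 * s / c| * (x * (1 - x) ^ (1 - b) / (b - 1)) := by
  have hsub : uIcc 0 x ⊆ Iio 1 := by
    rw [uIcc_of_le hx.1]; exact fun t ht => ht.2.trans_lt hx.2
  calc scale s μ c x ≤ ∫ t in (0 : ℝ)..x, exp |2 * s / c| * (1 - t) ^ (-b) :=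
        intervalIntegral.integral_mono_on hx.1
          ((continuousOn_scaleDensity s μ c).mono hsub).intervalIntegrable
          (((continuousOn_one_sub_rpow _).mono hsub).intervalIntegrable.const_mul _)
          fun t ht => scaleDensity_le hb ⟨ht.1, ht.2.trans_lt hx.2⟩
    _ ≤ exp |2 * s / c| * (x * (1 - x) ^ (1 - b) / (b - 1)) := by
        rw [intervalIntegral.integral_const_mul]
        gcongr
        exact integral_one_sub_rpow_neg_le hb₁ hb₂ hx.1 hx.2

lemma sq_scale_mul_speedDensity_le (hc : 0 < c) {b x : ℝ} (hb : 2 * μ / c ≤ b) (hb₁ : 1 < b)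
    (hb₂ : b ≤ 2) (hx : x ∈ Ioo (0 : ℝ) 1) :
    scale s μ c x ^ 2 * speedDensity s μ c x ≤
      exp |2 * s / c| ^ 3 / (c * (b - 1) ^ 2) * (1 - x) ^ (1 + 2 * μ / c - 2 * b) := by
  have hy : 0 < 1 - x := sub_pos.2 hx.2
  have hpow : ((1 - x) ^ (1 - b)) ^ 2 * (1 - x) ^ (2 * μ / c - 1) =
      (1 - x) ^ (1 + 2 * μ / c - 2 * b) := by
    rw [← rpow_natCast, ← rpow_mul hy.le, ← rpow_add hy]; ring_nf
  calc scale s μ c x ^ 2 * speedDensity s μ c x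
      ≤ (exp |2 * s / c| * (x * (1 - x) ^ (1 - b) / (b - 1))) ^ 2 *
          (exp |2 * s / c| / c * ((1 - x) ^ (2 * μ / c - 1) / x)) := by
        have hS := scale_nonneg (s := s) (μ := μ) (c := c) (Ioo_subset_Icc_self hx)
        gcongr
        · exact speedDensity_nonneg hc hx
        · exact scale_le hb hb₁ hb₂ (Ioo_subset_Ico_self hx)
        · exact speedDensity_le hc hx
    _ = exp |2 * s / c| ^ 3 / (c * (b - 1) ^ 2) * x * (1 - x) ^ (1 + 2 * μ / c - 2 * b) := by
        rw [← hpow]; field_simp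
    _ ≤ exp |2 * s / c| ^ 3 / (c * (b - 1) ^ 2) * (1 - x) ^ (1 + 2 * μ / c - 2 * b) := by
        refine mul_le_mul_of_nonneg_right (mul_le_of_le_one_right (by positivity) hx.2.le) ?_
        exact rpow_nonneg hy.le _

end

end WrightFisher

open WrightFisher

theorem conditioned_speed_density_integrable_general (s μ c : ℝ)
    (hμ : 0 < μ) (hc : 0 < c) (h : μ < c) :
    IntegrableOn
      (fun x : ℝ =>
        (∫ t in (0 : ℝ)..x, Real.exp (-2 * s * t / c) * (1 - t) ^ (-(2 * μ / c))) ^ 2 *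
          (Real.exp (2 * s * x / c) * (1 - x) ^ (2 * μ / c - 1) / (c * x)))
      (Set.Ioo (0 : ℝ) 1) := by
  change IntegrableOn (fun x => scale s μ c x ^ 2 * speedDensity s μ c x) (Ioo 0 1)
  have ha₀ : 0 < 2 * μ / c := by positivity
  have ha₂ : 2 * μ / c < 2 := by rw [div_lt_iff₀ hc]; linarith
  obtain ⟨b, hb_lo, hb_hi⟩ := exists_between
    (max_lt (by linarith) (by linarith) : max (2 * μ / c) 1 < 1 + 2 * μ / c / 2)
  obtain ⟨hab, hb₁⟩ := max_lt_iff.1 hb_lo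
  have hScont : ContinuousOn (scale s μ c) (Ioo 0 1) := fun x hx =>
    (hasDerivAt_scale s μ c hx.2).continuousAt.continuousWithinAt
  refine ((integrableOn_one_sub_rpow (p := 1 + 2 * μ / c - 2 * b) (by linarith)).const_mul
    (exp |2 * s / c| ^ 3 / (c * (b - 1) ^ 2))).mono'
    ((hScont.pow 2).mul (continuousOn_speedDensity s μ c hc)
      |>.aestronglyMeasurable measurableSet_Ioo) ?_
  refine (ae_restrict_iff' measurableSet_Ioo).2 (Filter.Eventually.of_forall fun x hx => ?_)
  rw [norm_of_nonneg (mul_nonneg (sq_nonneg _) (speedDensity_nonneg hc hx))]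
  exact sq_scale_mul_speedDensity_le hc hab.le hb₁ (by linarith) hx

/-- If `μ < c`, the conditioned speed density `m*(x) = S(x)² m(x)` of the
Wright–Fisher diffusion conditioned never to hit `0` is integrable on `(0,1)`. -/
theorem conditioned_speed_density_integrable (s μ c : ℝ) (hs : 0 < s)
    (hμ : 0 < μ) (hc : 0 < c) (h : μ < c) :
    IntegrableOn
      (fun x : ℝ =>
        (∫ t in (0 : ℝ)..x, Real.exp (-2 * s * t / c) * (1 - t) ^ (-(2 * μ / c))) ^ 2 *
          (Real.exp (2 * s * x / c) * (1 - x) ^ (2 * μ / c - 1) / (c * x)))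
      (Set.Ioo (0 : ℝ) 1) :=
  conditioned_speed_density_integrable_general s μ c hμ hc h
end

section
/- Suppose (π(k))_{k≥1} is a probability distribution on the positive integers solving the quasi-stationarity recursion b_{k-1}π(k-1) + d_{k+1}π(k+1) = (b_k + d_k - d₁π(1))π(k) for all k ≥ 1 (with π(0) := 0), where b_k = bk and d_k = dk + ck(k-1). If G(θ) = Σ_{k≥1} π(k)θ^k converges for |θ| ≤ 1 and is twice differentiable on (0,1), then G satisfies the ODE cθ(1-θ)G''(θ) + (d - bθ)(1-θ)G'(θ) + aG(θ) = a on (0,1), where a = dπ(1); moreover G(0) = 0, G(1) = 1, and a = dG'(0). -/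
/-- If `(π k)_{k≥1}` is a probability distribution on the positive integers
solving the quasi-stationarity recursion for the logistic branching process
(birth rate `b_k = bk`, death rate `d_k = dk + ck(k-1)`), and its generating
function `G(θ) = Σ π(k)θ^k` converges for `|θ| ≤ 1` and is twice differentiable
on `(0,1)`, then `G` satisfies
`cθ(1-θ)G'' + (d-bθ)(1-θ)G' + aG = a` with `a = dπ(1)`, and moreover
`G(0) = 0`, `G(1) = 1`, `a = dG'(0)`. -/
theorem yaglom_pgf_ode (b c d : ℝ) (hb : 0 < b) (hc : 0 < c) (hd : 0 < d)
    (π : ℕ → ℝ) (hπ0 : π 0 = 0) (hnn : ∀ k, 0 ≤ π k) (hsum : ∑' k, π k = 1)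
    (hrec : ∀ k : ℕ, 1 ≤ k →
      b * ((k : ℝ) - 1) * π (k - 1) +
          (d * ((k : ℝ) + 1) + c * ((k : ℝ) + 1) * k) * π (k + 1) =
        (b * k + (d * k + c * k * ((k : ℝ) - 1)) - d * π 1) * π k)
    (G : ℝ → ℝ) (hG : ∀ θ : ℝ, G θ = ∑' k, π k * θ ^ k)
    (hconv : ∀ θ : ℝ, |θ| ≤ 1 → Summable (fun k => π k * θ ^ k))
    (hdiff : ∀ θ ∈ Set.Ioo (0 : ℝ) 1,
      DifferentiableAt ℝ G θ ∧ DifferentiableAt ℝ (deriv G) θ) :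
    (∀ θ ∈ Set.Ioo (0 : ℝ) 1,
      c * θ * (1 - θ) * deriv (deriv G) θ + (d - b * θ) * (1 - θ) * deriv G θ +
        (d * π 1) * G θ = d * π 1) ∧
    G 0 = 0 ∧ G 1 = 1 ∧ d * π 1 = d * deriv G 0 := by
  have hsumπ : Summable π := by simpa using hconv 1 (by norm_num)
  have hπle : ∀ k, π k ≤ 1 := fun k => hsum ▸ Summable.le_tsum hsumπ k (fun j _ => hnn j)
  -- first derivative of G on (-1,1)
  have key1 : ∀ y ∈ Set.Ioo (-1 : ℝ) 1,
      HasDerivAt G (∑' k, π k * ((k : ℝ) * y ^ (k - 1))) y := by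
    intro y hy
    have hay : |y| < 1 := abs_lt.mpr ⟨hy.1, hy.2⟩
    set r : ℝ := (|y| + 1) / 2 with hrdef
    have hr0 : 0 < r := by positivity
    have hr1 : r < 1 := by rw [hrdef]; linarith
    have hyr : |y| < r := by rw [hrdef]; linarith [abs_nonneg y]
    have hu : Summable (fun k : ℕ => (k : ℝ) * r ^ k / r) := by
      have h := (summable_pow_mul_geometric_of_norm_lt_one (R := ℝ) 1
        (by rwa [Real.norm_eq_abs, abs_of_pos hr0])).div_const r
      exact h.congr fun k => by rw [pow_one]
    have hbound : ∀ (k : ℕ), ∀ x ∈ Set.Ioo (-r) r,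
        ‖π k * ((k : ℝ) * x ^ (k - 1))‖ ≤ (k : ℝ) * r ^ k / r := by
      intro k x hx
      have hxr : |x| < r := abs_lt.mpr ⟨hx.1, hx.2⟩
      have h1 : |x| ^ (k - 1) ≤ r ^ (k - 1) := pow_le_pow_left₀ (abs_nonneg x) hxr.le _
      have h2 : r ^ (k - 1) * r ≤ r ^ k := by
        rw [← pow_succ]
        exact pow_le_pow_of_le_one hr0.le hr1.le (by omega)
      have hk0 : (0:ℝ) ≤ (k:ℝ) := Nat.cast_nonneg k
      rw [Real.norm_eq_abs, abs_mul, abs_mul, abs_pow, abs_of_nonneg (hnn k),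
        Nat.abs_cast, le_div_iff₀ hr0]
      have h3 : π k * ((k:ℝ) * |x| ^ (k-1)) ≤ 1 * ((k:ℝ) * r ^ (k-1)) :=
        mul_le_mul (hπle k) (mul_le_mul_of_nonneg_left h1 hk0) (by positivity) one_pos.le
      nlinarith [mul_le_mul_of_nonneg_right h3 hr0.le, mul_le_mul_of_nonneg_left h2 hk0]
    have H := hasDerivAt_tsum_of_isPreconnected hu isOpen_Ioo isPreconnected_Ioo
      (g := fun (k : ℕ) (x : ℝ) => π k * x ^ k)
      (g' := fun (k : ℕ) (x : ℝ) => π k * ((k : ℝ) * x ^ (k - 1)))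
      (fun k x _ => (hasDerivAt_pow k x).const_mul (π k)) hbound
      (y₀ := 0) (Set.mem_Ioo.mpr ⟨by linarith, hr0⟩) (hconv 0 (by norm_num))
      (Set.mem_Ioo.mpr ⟨(abs_lt.mp hyr).1, (abs_lt.mp hyr).2⟩)
    have hGfun : (fun z : ℝ => ∑' k, π k * z ^ k) = G := funext fun z => (hG z).symm
    rwa [hGfun] at H
  -- second derivative
  have key2 : ∀ y ∈ Set.Ioo (-1 : ℝ) 1,
      HasDerivAt (fun x : ℝ => ∑' k, π k * ((k : ℝ) * x ^ (k - 1)))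
        (∑' k, π k * ((k : ℝ) * (((k - 1 : ℕ) : ℝ) * y ^ (k - 1 - 1)))) y := by
    intro y hy
    have hay : |y| < 1 := abs_lt.mpr ⟨hy.1, hy.2⟩
    set r : ℝ := (|y| + 1) / 2 with hrdef
    have hr0 : 0 < r := by positivity
    have hr1 : r < 1 := by rw [hrdef]; linarith
    have hyr : |y| < r := by rw [hrdef]; linarith [abs_nonneg y]
    have hu : Summable (fun k : ℕ => (k : ℝ) ^ 2 * r ^ k / r ^ 2) :=
      (summable_pow_mul_geometric_of_norm_lt_one (R := ℝ) 2
        (by rwa [Real.norm_eq_abs, abs_of_pos hr0])).div_const (r ^ 2)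
    have hbound : ∀ (k : ℕ), ∀ x ∈ Set.Ioo (-r) r,
        ‖π k * ((k : ℝ) * (((k - 1 : ℕ) : ℝ) * x ^ (k - 1 - 1)))‖ ≤ (k : ℝ) ^ 2 * r ^ k / r ^ 2 := by
      intro k x hx
      have hxr : |x| < r := abs_lt.mpr ⟨hx.1, hx.2⟩
      have h1 : |x| ^ (k - 1 - 1) ≤ r ^ (k - 1 - 1) := pow_le_pow_left₀ (abs_nonneg x) hxr.le _
      have h2 : r ^ (k - 1 - 1) * r ^ 2 ≤ r ^ k := by
        rw [← pow_add]
        exact pow_le_pow_of_le_one hr0.le hr1.le (by omega)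
      have hk0 : (0:ℝ) ≤ (k:ℝ) := Nat.cast_nonneg k
      have hcast : ((k - 1 : ℕ) : ℝ) ≤ (k : ℝ) := Nat.cast_le.mpr (Nat.sub_le k 1)
      have hc0 : (0:ℝ) ≤ ((k - 1 : ℕ) : ℝ) := Nat.cast_nonneg _
      rw [Real.norm_eq_abs, abs_mul, abs_mul, abs_mul, abs_pow, abs_of_nonneg (hnn k),
        Nat.abs_cast, Nat.abs_cast, le_div_iff₀ (by positivity : (0:ℝ) < r ^ 2)]
      have h3 : π k * ((k:ℝ) * (((k-1:ℕ):ℝ) * |x| ^ (k-1-1))) ≤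
          1 * ((k:ℝ) * ((k:ℝ) * r ^ (k-1-1))) :=
        mul_le_mul (hπle k)
          (mul_le_mul_of_nonneg_left
            (mul_le_mul hcast h1 (by positivity) hk0) hk0) (by positivity) one_pos.le
      nlinarith [mul_le_mul_of_nonneg_right h3 (by positivity : (0:ℝ) ≤ r ^ 2),
        mul_le_mul_of_nonneg_left h2 (by positivity : (0:ℝ) ≤ (k:ℝ) * (k:ℝ))]
    have hg0 : Summable (fun k : ℕ => π k * ((k:ℝ) * (0:ℝ) ^ (k - 1))) := by
      apply summable_of_ne_finset_zero (s := ({0, 1} : Finset ℕ))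
      intro k hk
      simp only [Finset.mem_insert, Finset.mem_singleton] at hk
      push_neg at hk
      rw [zero_pow (by omega : k - 1 ≠ 0)]
      ring
    exact hasDerivAt_tsum_of_isPreconnected hu isOpen_Ioo isPreconnected_Ioo
      (g := fun (k : ℕ) (x : ℝ) => π k * ((k : ℝ) * x ^ (k - 1)))
      (g' := fun (k : ℕ) (x : ℝ) => π k * ((k : ℝ) * (((k - 1 : ℕ) : ℝ) * x ^ (k - 1 - 1))))
      (fun k x _ => ((hasDerivAt_pow (k-1) x).const_mul ((k:ℝ))).const_mul (π k)) hbound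
      (y₀ := 0) (Set.mem_Ioo.mpr ⟨by linarith, hr0⟩) hg0
      (Set.mem_Ioo.mpr ⟨(abs_lt.mp hyr).1, (abs_lt.mp hyr).2⟩)
  have hmem01 : ∀ θ : ℝ, θ ∈ Set.Ioo (0:ℝ) 1 → θ ∈ Set.Ioo (-1:ℝ) 1 :=
    fun θ hθ => ⟨by linarith [hθ.1], hθ.2⟩
  have hd0 : deriv G 0 = π 1 := by
    have h := (key1 0 (by norm_num)).deriv
    rw [h, tsum_eq_single 1 ?_]
    · norm_num
    · intro k hk
      rcases Nat.eq_zero_or_pos k with h0 | h1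
      · simp [h0]
      · rw [zero_pow (by omega : k - 1 ≠ 0)]; ring
  refine ⟨?_, ?_, ?_, ?_⟩
  · -- the ODE
    intro θ hθ
    have hθ0 : 0 < θ := hθ.1
    have hθ1 : θ < 1 := hθ.2
    have haθ : |θ| < 1 := abs_lt.mpr ⟨by linarith, hθ1⟩
    have hmem := hmem01 θ hθ
    -- identify the derivatives
    have hB : deriv G θ = ∑' k, π k * ((k : ℝ) * θ ^ (k - 1)) := (key1 θ hmem).deriv
    have hEq : deriv G =ᶠ[nhds θ] (fun x : ℝ => ∑' k, π k * ((k : ℝ) * x ^ (k - 1))) := by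
      filter_upwards [Ioo_mem_nhds (show (-1:ℝ) < θ by linarith) hθ1] with y hy
      exact (key1 y hy).deriv
    have hC : deriv (deriv G) θ
        = ∑' k, π k * ((k : ℝ) * (((k - 1 : ℕ) : ℝ) * θ ^ (k - 1 - 1))) := by
      rw [hEq.deriv_eq]; exact (key2 θ hmem).deriv
    -- abbreviations
    set A : ℝ := ∑' k, π k * θ ^ k with hAdef
    set B : ℝ := ∑' k, π k * ((k : ℝ) * θ ^ (k - 1)) with hBdef
    set C2 : ℝ := ∑' k, π k * ((k : ℝ) * (((k - 1 : ℕ) : ℝ) * θ ^ (k - 1 - 1))) with hC2def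
    -- summability of the derivative series at θ
    have hSA : Summable (fun k : ℕ => π k * θ ^ k) := hconv θ haθ.le
    have hSB : Summable (fun k : ℕ => π k * ((k : ℝ) * θ ^ (k - 1))) := by
      apply Summable.of_norm_bounded (g := fun k : ℕ => (k:ℝ) * θ ^ k / θ)
      · have h := (summable_pow_mul_geometric_of_norm_lt_one (R := ℝ) 1
          (by rwa [Real.norm_eq_abs])).div_const θ
        exact h.congr fun k => by rw [pow_one]
      · intro k
        have h2 : θ ^ (k - 1) * θ ≤ θ ^ k := by
          rw [← pow_succ]
          exact pow_le_pow_of_le_one hθ0.le hθ1.le (by omega)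
        have hk0 : (0:ℝ) ≤ (k:ℝ) := Nat.cast_nonneg k
        rw [Real.norm_eq_abs, abs_mul, abs_mul, abs_pow, abs_of_nonneg (hnn k),
          Nat.abs_cast, abs_of_pos hθ0, le_div_iff₀ hθ0]
        have h3 : π k * ((k:ℝ) * θ ^ (k-1)) ≤ 1 * ((k:ℝ) * θ ^ (k-1)) :=
          mul_le_mul_of_nonneg_right (hπle k) (by positivity)
        nlinarith [mul_le_mul_of_nonneg_right h3 hθ0.le, mul_le_mul_of_nonneg_left h2 hk0]
    have hSC : Summable (fun k : ℕ => π k * ((k : ℝ) * (((k - 1 : ℕ) : ℝ) * θ ^ (k - 1 - 1)))) := by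
      apply Summable.of_norm_bounded (g := fun k : ℕ => (k:ℝ)^2 * θ ^ k / θ ^ 2)
      · exact (summable_pow_mul_geometric_of_norm_lt_one (R := ℝ) 2
          (by rwa [Real.norm_eq_abs])).div_const (θ ^ 2)
      · intro k
        have h2 : θ ^ (k - 1 - 1) * θ ^ 2 ≤ θ ^ k := by
          rw [← pow_add]
          exact pow_le_pow_of_le_one hθ0.le hθ1.le (by omega)
        have hk0 : (0:ℝ) ≤ (k:ℝ) := Nat.cast_nonneg k
        have hcast : ((k - 1 : ℕ) : ℝ) ≤ (k : ℝ) := Nat.cast_le.mpr (Nat.sub_le k 1)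
        rw [Real.norm_eq_abs, abs_mul, abs_mul, abs_mul, abs_pow, abs_of_nonneg (hnn k),
          Nat.abs_cast, Nat.abs_cast, abs_of_pos hθ0, le_div_iff₀ (by positivity : (0:ℝ) < θ ^ 2)]
        have h3 : π k * ((k:ℝ) * (((k-1:ℕ):ℝ) * θ ^ (k-1-1))) ≤
            1 * ((k:ℝ) * ((k:ℝ) * θ ^ (k-1-1))) :=
          mul_le_mul (hπle k)
            (mul_le_mul_of_nonneg_left
              (mul_le_mul_of_nonneg_right hcast (by positivity)) hk0) (by positivity) one_pos.le
        nlinarith [mul_le_mul_of_nonneg_right h3 (by positivity : (0:ℝ) ≤ θ ^ 2),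
          mul_le_mul_of_nonneg_left h2 (by positivity : (0:ℝ) ≤ (k:ℝ) * (k:ℝ))]
    -- the five series
    set X1 : ℕ → ℝ := fun k => b * ((k:ℝ) - 1) * π (k-1) * θ^(k+1) with hX1def
    set X2 : ℕ → ℝ := fun k => (d * ((k:ℝ)+1) + c * ((k:ℝ)+1) * k) * π (k+1) * θ^(k+1) with hX2def
    set X3 : ℕ → ℝ := fun k => (b + d) * (k:ℝ) * π k * θ^(k+1) with hX3def
    set X4 : ℕ → ℝ := fun k => c * (k:ℝ) * ((k:ℝ)-1) * π k * θ^(k+1) with hX4def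
    set X5 : ℕ → ℝ := fun k => d * π 1 * π k * θ^(k+1) with hX5def
    set Y : ℕ → ℝ := fun j => (d * (j:ℝ) + c * (j:ℝ) * ((j:ℝ)-1)) * π j * θ^j with hYdef
    set W : ℕ → ℝ := fun k => b * (k:ℝ) * π k * θ^(k+2) with hWdef
    -- W
    have hWterm : ∀ k : ℕ, (b*θ^3) * (π k * ((k:ℝ) * θ^(k-1))) = W k := by
      intro k
      rw [hWdef]
      rcases k with _ | m
      · simp
      · simp only [Nat.add_sub_cancel]; push_cast; ring
    have hW_sum : Summable W := (hSB.mul_left (b*θ^3)).congr hWterm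
    have hWval : ∑' k, W k = b * θ^3 * B := by
      rw [hBdef, ← tsum_mul_left]
      exact tsum_congr fun k => (hWterm k).symm
    -- X1
    have hshift1 : ∀ k : ℕ, W k = X1 (k+1) := by
      intro k
      rw [hWdef, hX1def]
      simp only [Nat.add_sub_cancel]
      push_cast; ring
    have hX1_sum : Summable X1 := by
      rw [← summable_nat_add_iff 1]
      exact hW_sum.congr hshift1
    have hX1val : ∑' k, X1 k = b * θ^3 * B := by
      rw [Summable.tsum_eq_zero_add hX1_sum]
      have h0 : X1 0 = 0 := by simp [hX1def, hπ0]
      rw [h0, zero_add, tsum_congr (fun k => (hshift1 k).symm), hWval]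
    -- Y and X2
    have hYterm : ∀ j : ℕ, d*θ*(π j*((j:ℝ)*θ^(j-1))) + c*θ^2*(π j*((j:ℝ)*(((j-1:ℕ):ℝ)*θ^(j-1-1)))) = Y j := by
      intro j
      rw [hYdef]
      rcases j with _ | _ | m
      · simp
      · norm_num; ring
      · simp only [Nat.add_sub_cancel]; push_cast; ring
    have hY_sum : Summable Y :=
      (((hSB.mul_left (d*θ)).add (hSC.mul_left (c*θ^2)))).congr hYterm
    have hYval : ∑' j, Y j = d*θ*B + c*θ^2*C2 := by
      rw [tsum_congr (fun j => (hYterm j).symm),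
        Summable.tsum_add (hSB.mul_left (d*θ)) (hSC.mul_left (c*θ^2)),
        tsum_mul_left, tsum_mul_left, hBdef, hC2def]
    have hshift2 : ∀ k : ℕ, Y (k+1) = X2 k := by
      intro k
      rw [hYdef, hX2def]
      push_cast; ring
    have hX2_sum : Summable X2 := ((summable_nat_add_iff 1).mpr hY_sum).congr hshift2
    have hX2val : ∑' k, X2 k = d*θ*B + c*θ^2*C2 := by
      have h := Summable.tsum_eq_zero_add hY_sum
      have h0 : Y 0 = 0 := by simp [hYdef]
      rw [hYval, h0, zero_add, tsum_congr hshift2] at h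
      exact h.symm
    -- X3
    have hX3term : ∀ k : ℕ, ((b+d)*θ^2) * (π k * ((k:ℝ) * θ^(k-1))) = X3 k := by
      intro k
      rw [hX3def]
      rcases k with _ | m
      · simp
      · simp only [Nat.add_sub_cancel]; push_cast; ring
    have hX3_sum : Summable X3 := (hSB.mul_left ((b+d)*θ^2)).congr hX3term
    have hX3val : ∑' k, X3 k = (b+d)*θ^2*B := by
      rw [hBdef, ← tsum_mul_left]
      exact tsum_congr fun k => (hX3term k).symm
    -- X4
    have hX4term : ∀ k : ℕ, (c*θ^3) * (π k * ((k:ℝ) * (((k-1:ℕ):ℝ) * θ^(k-1-1)))) = X4 k := by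
      intro k
      rw [hX4def]
      rcases k with _ | _ | m
      · simp
      · norm_num
      · simp only [Nat.add_sub_cancel]; push_cast; ring
    have hX4_sum : Summable X4 := (hSC.mul_left (c*θ^3)).congr hX4term
    have hX4val : ∑' k, X4 k = c*θ^3*C2 := by
      rw [hC2def, ← tsum_mul_left]
      exact tsum_congr fun k => (hX4term k).symm
    -- X5
    have hX5term : ∀ k : ℕ, (d * π 1 * θ) * (π k * θ^k) = X5 k := by
      intro k; rw [hX5def]; ring
    have hX5_sum : Summable X5 := (hSA.mul_left (d * π 1 * θ)).congr hX5term
    have hX5val : ∑' k, X5 k = d * π 1 * θ * A := by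
      rw [hAdef, ← tsum_mul_left]
      exact tsum_congr fun k => (hX5term k).symm
    -- the recursion sum
    have hPsi : ∑' k, (X1 k + X2 k - (X3 k + X4 k) + X5 k) = d * π 1 * θ := by
      rw [tsum_eq_single 0 ?_]
      · rw [hX1def, hX2def, hX3def, hX4def, hX5def]
        simp [hπ0]
      · intro k hk
        have hr := hrec k (Nat.one_le_iff_ne_zero.mpr hk)
        rw [hX1def, hX2def, hX3def, hX4def, hX5def]
        simp only
        linear_combination θ^(k+1) * hr
    have hsplit : ∑' k, (X1 k + X2 k - (X3 k + X4 k) + X5 k)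
        = (∑' k, X1 k + ∑' k, X2 k - (∑' k, X3 k + ∑' k, X4 k)) + ∑' k, X5 k := by
      rw [Summable.tsum_add (((hX1_sum.add hX2_sum).sub (hX3_sum.add hX4_sum))) hX5_sum,
        Summable.tsum_sub (hX1_sum.add hX2_sum) (hX3_sum.add hX4_sum),
        Summable.tsum_add hX1_sum hX2_sum, Summable.tsum_add hX3_sum hX4_sum]
    have hfinal : b*θ^3*B + (d*θ*B + c*θ^2*C2) - ((b+d)*θ^2*B + c*θ^3*C2)
        + d * π 1 * θ * A = d * π 1 * θ := by
      rw [← hX1val, ← hX2val, ← hX3val, ← hX4val, ← hX5val, ← hsplit, hPsi]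
    rw [hB, hC, hG θ, ← hAdef]
    apply mul_left_cancel₀ (ne_of_gt hθ0)
    linear_combination hfinal
  · -- G 0 = 0
    rw [hG 0, tsum_eq_single 0 (fun k hk => by rw [zero_pow hk]; ring)]
    simp [hπ0]
  · rw [hG 1]; simpa using hsum
  · rw [hd0]
end
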